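/- Let Y, U ∈ V be orthonormal (⟨Y,Y⟩ = ⟨U,U⟩ = 1, ⟨Y,U⟩ = 0). Then g_Y(Y,Y)·g_Y(U,U) − g_Y(Y,U)² = 2/(1 − ⟨Y,X⟩)⁴ + (2⟨U,X⟩² + ⟨Y,X⟩ − 1)/(1 − ⟨Y,X⟩)⁶. -/

import Mathlib

open scoped RealInnerProductSpace

/-- The Matsumoto metric `F(y) = ⟨y,y⟩ / (√⟨y,y⟩ − ⟨X,y⟩)` associated to the
vector `X` of an inner product space. -/
noncomputable def matsumotoF {V : Type*} [NormedAddCommGroup V] [InnerProductSpace ℝ V]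
    (X y : V) : ℝ :=
  ⟪y, y⟫ / (Real.sqrt ⟪y, y⟫ - ⟪X, y⟫)

/-- The fundamental tensor of the Matsumoto metric:
`g_Y(U,W) = (1/2)·∂²/∂s∂t [F²(Y + sU + tW)]` at `s = t = 0`. -/
noncomputable def matsumotoG {V : Type*} [NormedAddCommGroup V] [InnerProductSpace ℝ V]
    (X Y U W : V) : ℝ :=
  (1 / 2) * deriv (fun s : ℝ =>
    deriv (fun t : ℝ => (matsumotoF X (Y + s • U + t • W)) ^ 2) 0) 0

/-! The directional derivative of `F² = ‖y‖⁴ / (‖y‖ - ⟪X, y⟫)²` along a line through `y ≠ 0`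
depends only on `‖y‖`, `⟪X, y⟫`, `⟪y, W⟫` and `⟪X, W⟫`. Differentiating it once more along
`Y + sU` for a unit vector `Y` gives `g_Y(U, W)` as a rational function of the inner products of
`X, Y, U, W`. For orthonormal `Y, U`, with `a = ⟪X, Y⟫` and `c = ⟪X, U⟫`, this reads
`g_Y(Y, Y) = 1/(1-a)²`, `g_Y(Y, U) = c/(1-a)³`, `g_Y(U, U) = ((1-a)(1-2a) + 3c²)/(1-a)⁴`,
and the determinant is a rational identity in `a` and `c`. -/

open scoped Topology

section

variable {V : Type*} [NormedAddCommGroup V] [InnerProductSpace ℝ V]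

theorem HasDerivAt.norm_of_ne_zero {f : ℝ → V} {f' : V} {t : ℝ} (hf : HasDerivAt f f' t)
    (h0 : f t ≠ 0) :
    HasDerivAt (fun s => ‖f s‖) (⟪f t, f'⟫ / ‖f t‖) t := by
  have h := hf.norm_sq.sqrt (by positivity)
  simp only [Real.sqrt_sq (norm_nonneg _)] at h
  convert h using 1
  field_simp

theorem matsumotoF_eq_norm (X y : V) : matsumotoF X y = ‖y‖ ^ 2 / (‖y‖ - ⟪X, y⟫) := by
  rw [matsumotoF, real_inner_self_eq_norm_sq, Real.sqrt_sq (norm_nonneg y)]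

theorem norm_sub_inner_pos {X : V} (hX : ‖X‖ < 1) {y : V} (hy : y ≠ 0) :
    0 < ‖y‖ - ⟪X, y⟫ := by
  have := real_inner_le_norm X y
  have := norm_pos_iff.2 hy
  nlinarith

theorem one_sub_inner_pos {X : V} (hX : ‖X‖ < 1) {Y : V} (hY : ‖Y‖ = 1) :
    0 < 1 - ⟪X, Y⟫ := by
  have := real_inner_le_norm X Y
  rw [hY, mul_one] at this
  linarith

noncomputable def matsumotoFSqDeriv (X y w : V) : ℝ :=
  2 * ‖y‖ ^ 2 * (⟪y, w⟫ * (‖y‖ - 2 * ⟪X, y⟫) + ‖y‖ ^ 2 * ⟪X, w⟫) / (‖y‖ - ⟪X, y⟫) ^ 3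

theorem hasDerivAt_matsumotoF_sq {X : V} {f : ℝ → V} {f' : V} {t : ℝ}
    (hf : HasDerivAt f f' t) (h0 : f t ≠ 0) (hD : ‖f t‖ - ⟪X, f t⟫ ≠ 0) :
    HasDerivAt (fun s => matsumotoF X (f s) ^ 2) (matsumotoFSqDeriv X (f t) f') t := by
  have hρ := hf.norm_of_ne_zero h0
  have hβ := (hasDerivAt_const t X).inner ℝ hf
  simp only [inner_zero_left, add_zero] at hβ
  have hF : HasDerivAt (fun s => (‖f s‖ ^ 2 / (‖f s‖ - ⟪X, f s⟫)) ^ 2) _ t :=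
    ((hρ.pow 2).div (hρ.sub hβ) hD).pow 2
  simp only [matsumotoF_eq_norm, matsumotoFSqDeriv]
  refine hF.congr_deriv ?_
  have : ‖f t‖ ≠ 0 := norm_ne_zero_iff.2 h0
  simp only [Pi.div_apply, Pi.sub_apply, Pi.pow_apply, Nat.add_one_sub_one, pow_one,
    Nat.cast_ofNat]
  field_simp
  ring

theorem matsumotoG_eq_of_norm_eq_one {X : V} (hX : ‖X‖ < 1) {Y : V} (hY : ‖Y‖ = 1) (U W : V) :
    matsumotoG X Y U W =
      ((1 - ⟪X, Y⟫) * (⟪U, W⟫ * (1 - 2 * ⟪X, Y⟫)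
          + ⟪Y, W⟫ * ((3 - 4 * ⟪X, Y⟫) * ⟪Y, U⟫ - 2 * ⟪X, U⟫) + 4 * ⟪Y, U⟫ * ⟪X, W⟫)
        - 3 * (⟪Y, W⟫ * (1 - 2 * ⟪X, Y⟫) + ⟪X, W⟫) * (⟪Y, U⟫ - ⟪X, U⟫)) / (1 - ⟪X, Y⟫) ^ 4 := by
  have hline : HasDerivAt (fun s : ℝ => Y + s • U) U 0 := by
    simpa using ((hasDerivAt_id (0 : ℝ)).smul_const U).const_add Y
  have hY0 : Y ≠ 0 := norm_ne_zero_iff.1 (by simp [hY])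
  have hinner : (fun s : ℝ => deriv (fun t : ℝ => matsumotoF X (Y + s • U + t • W) ^ 2) 0)
      =ᶠ[𝓝 0] fun s => matsumotoFSqDeriv X (Y + s • U) W := by
    filter_upwards [hline.continuousAt.eventually_ne (by simpa using hY0)]
      with s (hs : Y + s • U ≠ 0)
    have := hasDerivAt_matsumotoF_sq (X := X)
      (((hasDerivAt_id (0 : ℝ)).smul_const W).const_add (Y + s • U))
      (by simpa using hs) (by simpa using (norm_sub_inner_pos hX hs).ne')
    simpa using this.deriv
  rw [matsumotoG, hinner.deriv_eq]
  have hρ := hline.norm_of_ne_zero (by simpa using hY0)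
  have hβ := (hasDerivAt_const (0 : ℝ) X).inner ℝ hline
  have hb := hline.inner ℝ (hasDerivAt_const (0 : ℝ) W)
  simp only [inner_zero_left, inner_zero_right, add_zero, zero_add, zero_smul] at hρ hβ hb
  have hD := (one_sub_inner_pos hX hY).ne'
  have h : HasDerivAt (fun s : ℝ => matsumotoFSqDeriv X (Y + s • U) W) _ 0 :=
    (((hρ.pow 2).const_mul 2).mul ((hb.mul (hρ.sub (hβ.const_mul 2))).add
      ((hρ.pow 2).mul_const ⟪X, W⟫))).div ((hρ.sub hβ).pow 3)
      (by simpa [hY] using pow_ne_zero 3 hD)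
  rw [h.deriv]
  simp only [Pi.mul_apply, Pi.add_apply, Pi.sub_apply, Pi.pow_apply, zero_smul, add_zero, hY,
    Nat.add_one_sub_one, pow_one, Nat.cast_ofNat, div_one]
  field_simp
  ring

end

theorem matsumotoG_det_formula_general
    {V : Type*} [NormedAddCommGroup V] [InnerProductSpace ℝ V]
    (X : V) (hX : ‖X‖ < 1 / 2) (Y U : V)
    (hY : ⟪Y, Y⟫ = 1) (hU : ⟪U, U⟫ = 1) (hYU : ⟪Y, U⟫ = 0) :
    matsumotoG X Y Y Y * matsumotoG X Y U U - matsumotoG X Y Y U ^ 2 =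
      2 / (1 - ⟪Y, X⟫) ^ 4 + (2 * ⟪U, X⟫ ^ 2 + ⟪Y, X⟫ - 1) / (1 - ⟪Y, X⟫) ^ 6 := by
  have hX1 : ‖X‖ < 1 := hX.trans (by norm_num)
  have hY1 : ‖Y‖ = 1 := by
    rwa [real_inner_self_eq_norm_sq, pow_eq_one_iff_of_nonneg (norm_nonneg Y) two_ne_zero] at hY
  have hD := (one_sub_inner_pos hX1 hY1).ne'
  simp only [matsumotoG_eq_of_norm_eq_one hX1 hY1, hY, hU, hYU, real_inner_comm X Y,
    real_inner_comm X U]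
  field_simp
  ring

theorem matsumotoG_det_formula
    {V : Type*} [NormedAddCommGroup V] [InnerProductSpace ℝ V] [FiniteDimensional ℝ V]
    (X : V) (hX : ‖X‖ < 1 / 2) (Y U : V)
    (hY : ⟪Y, Y⟫ = 1) (hU : ⟪U, U⟫ = 1) (hYU : ⟪Y, U⟫ = 0) :
    matsumotoG X Y Y Y * matsumotoG X Y U U - matsumotoG X Y Y U ^ 2 =
      2 / (1 - ⟪Y, X⟫) ^ 4 + (2 * ⟪U, X⟫ ^ 2 + ⟪Y, X⟫ - 1) / (1 - ⟪Y, X⟫) ^ 6 :=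
  matsumotoG_det_formula_general X hX Y U hY hU hYU
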